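/- arXiv:2410.13714 — 10 statements merged into one kernel-verified Lean document; each statement's English description precedes it below -/
import Mathlib

section
/- There exists a countable example space X and an uncountably infinite hypothesis class H ⊆ {0,1}^X that satisfies the UUS property and is uniformly generatable. Concretely, taking X = ℤ and H = {x ↦ 1[x ∈ A or x ≤ 0] : A ⊆ ℕ}, H is uncountable, satisfies UUS, and has Closure dimension 0 (so it is uniformly generatable). -/
open Set

variable {X : Type*}

/-- The set of distinct examples seen in the first `t` steps of the stream `x`. -/
def seenSet (x : ℕ → X) (t : ℕ) : Set X := x '' {i | i < t}

/-- The finite prefix `x₁, ..., x_t` of the stream, as a list. -/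
def prefList (x : ℕ → X) (t : ℕ) : List X := List.ofFn (fun i : Fin t => x i)

/-- The version space of `H` induced by the positive examples `S`. -/
def versionSpace (H : Set (Set X)) (S : Set X) : Set (Set X) := {h | h ∈ H ∧ S ⊆ h}

/-- The closure `⟨S⟩_H`: common positive examples of all consistent hypotheses. -/
def hclosure (H : Set (Set X)) (S : Set X) : Set X := ⋂₀ versionSpace H S

/-- There exist `d` distinct examples with nonempty version space and finite closure. -/
def FinClosureWitness (H : Set (Set X)) (d : ℕ) : Prop :=
  ∃ S : Finset X, S.card = d ∧ (versionSpace H ↑S).Nonempty ∧ (hclosure H ↑S).Finite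

/-- The Closure dimension of `H` is infinite. -/
def ClosureDimInf (H : Set (Set X)) : Prop := ∀ n : ℕ, ∃ d, n ≤ d ∧ FinClosureWitness H d

/-- The Closure dimension of `H` is at most `d`. -/
def ClosureDimLE (H : Set (Set X)) (d : ℕ) : Prop := ∀ d', d < d' → ¬ FinClosureWitness H d'

/-- Uniformly Unbounded Support property. -/
def UUS (H : Set (Set X)) : Prop := ∀ h ∈ H, h.Infinite

/-- The generator `G` outputs an unseen positive example of `h` at step `s`. -/
def GenOK (G : List X → X) (h : Set X) (x : ℕ → X) (s : ℕ) : Prop :=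
  G (prefList x s) ∈ h \ seenSet x s

def UniformlyGeneratable (H : Set (Set X)) : Prop :=
  ∃ G : List X → X, ∃ d : ℕ, ∀ h ∈ H, ∀ x : ℕ → X, (∀ i, x i ∈ h) →
    ∀ t, (seenSet x t).ncard = d → ∀ s, t ≤ s → GenOK G h x s

def NonUniformlyGeneratable (H : Set (Set X)) : Prop :=
  ∃ G : List X → X, ∀ h ∈ H, ∃ d : ℕ, ∀ x : ℕ → X, (∀ i, x i ∈ h) →
    ∀ t, (seenSet x t).ncard = d → ∀ s, t ≤ s → GenOK G h x s

/-- `x` is an enumeration of the support `h`. -/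
def IsEnum (h : Set X) (x : ℕ → X) : Prop := (∀ i, x i ∈ h) ∧ ∀ y ∈ h, ∃ i, x i = y

def GeneratableInLimit (H : Set (Set X)) : Prop :=
  ∃ G : List X → X, ∀ h ∈ H, ∀ x : ℕ → X, IsEnum h x →
    ∃ t, ∀ s, t ≤ s → GenOK G h x s

/-- The class `{x ↦ 1[x ∈ A or x ≤ 0] : A ⊆ ℕ}` over `ℤ`. -/
def Hup : Set (Set ℤ) :=
  {h | ∃ A : Set ℤ, (∀ a ∈ A, 0 < a) ∧ h = A ∪ {x : ℤ | x ≤ 0}}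


/-
Every hypothesis of `Hup` contains the infinite ray `Iic 0`. This makes every support infinite and
every closure infinite (Closure dimension 0), and a generator that answers one less than the minimum
of `0` and everything seen so far always lands in the ray at an unseen point. Uncountability comes
from the free choice of the positive part `A`.
-/

lemma Iic_zero_subset_of_mem_Hup {h : Set ℤ} (hh : h ∈ Hup) : Iic 0 ⊆ h := by
  obtain ⟨A, -, rfl⟩ := hh
  exact subset_union_right

lemma Iic_zero_subset_hclosure_Hup (S : Set ℤ) : Iic 0 ⊆ hclosure Hup S :=
  fun _ hx _ hh => Iic_zero_subset_of_mem_Hup hh.1 hx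

lemma uus_Hup : UUS Hup :=
  fun _ hh => (Iic_infinite 0).mono (Iic_zero_subset_of_mem_Hup hh)

lemma not_finClosureWitness_Hup (d : ℕ) : ¬ FinClosureWitness Hup d :=
  fun ⟨S, _, _, hfin⟩ => (Iic_infinite 0) (hfin.subset (Iic_zero_subset_hclosure_Hup S))

def hupOfSetNat (A : Set ℕ) : Set ℤ := (fun n : ℕ => (n : ℤ) + 1) '' A ∪ Iic 0

lemma hupOfSetNat_mem_Hup (A : Set ℕ) : hupOfSetNat A ∈ Hup :=
  ⟨_, by rintro _ ⟨n, -, rfl⟩; positivity, rfl⟩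

lemma hupOfSetNat_injective : Function.Injective hupOfSetNat := by
  have positive_part (A : Set ℕ) :
      hupOfSetNat A \ Iic 0 = (fun n : ℕ => (n : ℤ) + 1) '' A := by
    refine union_sdiff_cancel_right ?_
    rintro _ ⟨⟨n, -, rfl⟩, hn⟩
    simp only [mem_Iic] at hn
    omega
  intro A B hAB
  have hshift : Function.Injective (fun n : ℕ => (n : ℤ) + 1) := fun m n h => by
    simpa using h
  exact image_injective.mpr hshift (by rw [← positive_part, ← positive_part, hAB])

lemma not_countable_set_nat : ¬ Countable (Set ℕ) := fun _ =>
  let ⟨g, hg⟩ := exists_injective_nat (Set ℕ)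
  Function.cantor_injective g hg

lemma not_countable_Hup : ¬ Hup.Countable := fun hc =>
  not_countable_set_nat <| countable_univ_iff.mp <|
    MapsTo.countable_of_injOn (fun A _ => hupOfSetNat_mem_Hup A) hupOfSetNat_injective.injOn hc

lemma List.foldr_min_le_init {α : Type*} [LinearOrder α] (l : List α) (b : α) :
    l.foldr min b ≤ b := by
  induction l with
  | nil => exact le_rfl
  | cons a l ih => exact (min_le_right _ _).trans ih

lemma List.foldr_min_le_of_mem {α : Type*} [LinearOrder α] {l : List α} (b : α) {a : α}
    (ha : a ∈ l) : l.foldr min b ≤ a := by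
  induction l with
  | nil => cases ha
  | cons c l ih =>
    rcases List.mem_cons.mp ha with rfl | ha
    · exact min_le_left _ _
    · exact (min_le_right _ _).trans (ih ha)

lemma mem_prefList_of_lt (x : ℕ → X) {i s : ℕ} (hi : i < s) : x i ∈ prefList x s :=
  List.mem_ofFn.mpr ⟨⟨i, hi⟩, rfl⟩

def belowAll (l : List ℤ) : ℤ := l.foldr min 0 - 1

lemma belowAll_mem_Iic_diff_seenSet (x : ℕ → ℤ) (s : ℕ) :
    belowAll (prefList x s) ∈ Iic 0 \ seenSet x s := by
  refine ⟨?_, ?_⟩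
  · have := (prefList x s).foldr_min_le_init 0
    simp only [belowAll, mem_Iic]
    omega
  · rintro ⟨i, hi, hxi⟩
    have := List.foldr_min_le_of_mem 0 (mem_prefList_of_lt x hi)
    simp only [belowAll] at hxi
    omega

lemma uniformlyGeneratable_Hup : UniformlyGeneratable Hup :=
  ⟨belowAll, 0, fun _ hh x _ _ _ s _ =>
    sdiff_subset_sdiff_left (Iic_zero_subset_of_mem_Hup hh) (belowAll_mem_Iic_diff_seenSet x s)⟩

/-- an uncountable, UUS, uniformly generatable class (Closure dimension 0). -/
theorem stmt3 :
    ¬ Hup.Countable ∧ UUS Hup ∧ ClosureDimLE Hup 0 ∧ UniformlyGeneratable Hup :=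
  ⟨not_countable_Hup, uus_Hup, fun d _ => not_finClosureWitness_Hup d, uniformlyGeneratable_Hup⟩
end

section
/- If H is a hypothesis class over a countable example space X satisfying the UUS property and H is non-uniformly generatable, then there exists a non-decreasing sequence of classes H₁ ⊆ H₂ ⊆ ... with H = ⋃_{n ∈ ℕ} H_n such that each H_n is uniformly generatable (equivalently, C(H_n) < ∞ for all n). -/
open Set

variable {X : Type*}

lemma seen_succ (x : ℕ → X) (t : ℕ) :
    seenSet x (t+1) = insert (x t) (seenSet x t) := by
  unfold seenSet
  have : {i | i < t + 1} = insert t {i | i < t} := by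
    ext i; simp [Nat.lt_succ_iff_lt_or_eq, or_comm]; constructor <;> intro h <;> omega
  rw [this, Set.image_insert_eq]

lemma seen_finite (x : ℕ → X) (t : ℕ) : (seenSet x t).Finite := by
  induction t with
  | zero => simp [seenSet]
  | succ n ih => rw [seen_succ]; exact ih.insert _

lemma seen_ivt (x : ℕ → X) (t d : ℕ) (hd : d ≤ (seenSet x t).ncard) :
    ∃ t' ≤ t, (seenSet x t').ncard = d := by
  induction t with
  | zero =>
    simp [seenSet] at hd ⊢
    omega
  | succ n ih =>
    rcases le_or_gt d ((seenSet x n).ncard) with h | h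
    · obtain ⟨t', ht', h'⟩ := ih h
      exact ⟨t', ht'.trans (Nat.le_succ n), h'⟩
    · have hle : (seenSet x (n+1)).ncard ≤ (seenSet x n).ncard + 1 := by
        rw [seen_succ]
        exact (Set.ncard_insert_le _ _)
      exact ⟨n+1, le_refl _, by omega⟩

/-- a non-uniformly generatable class is a non-decreasing countable
union of uniformly generatable classes. -/
theorem stmt5 {X : Type*} [Countable X] (H : Set (Set X))
    (hUUS : UUS H) (hgen : NonUniformlyGeneratable H) :
    ∃ Hs : ℕ → Set (Set X), Monotone Hs ∧ (⋃ n, Hs n) = H ∧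
      ∀ n, UniformlyGeneratable (Hs n) := by
  obtain ⟨G, hG⟩ := hgen
  classical
  refine ⟨fun n => {h | h ∈ H ∧ ∃ d ≤ n, ∀ x : ℕ → X, (∀ i, x i ∈ h) →
    ∀ t, (seenSet x t).ncard = d → ∀ s, t ≤ s → GenOK G h x s}, ?_, ?_, ?_⟩
  · intro m n hmn h ⟨hH, d, hd, hP⟩
    exact ⟨hH, d, hd.trans hmn, hP⟩
  · ext h
    simp only [Set.mem_iUnion, Set.mem_setOf_eq]
    constructor
    · rintro ⟨n, hH, _⟩; exact hH
    · intro hH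
      obtain ⟨d, hd⟩ := hG h hH
      exact ⟨d, hH, d, le_refl d, hd⟩
  · intro n
    refine ⟨G, n, ?_⟩
    rintro h ⟨hH, d, hdn, hP⟩ x hx t ht s hts
    obtain ⟨t', ht', h'⟩ := seen_ivt x t d (by omega)
    exact hP x hx t' h' s (ht'.trans hts)
end

section
/- If H over a countable example space X satisfies the UUS property and there exists a non-decreasing sequence of uniformly generatable classes H₁ ⊆ H₂ ⊆ ... with H = ⋃_{n ∈ ℕ} H_n, then H is non-uniformly generatable. -/
open Set

variable {X : Type*}

/-!
Let `G n` generate `Hs n` once `d n` distinct examples have been seen. After `k` distinct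
examples, run `G m` for the largest `m ≤ k` with `d m ≤ k`. For `h ∈ Hs n`, as soon as
`k ≥ max n (d n)` that index satisfies `m ≥ n`, so `h ∈ Hs m`; and since the number of
distinct examples grows by at most one per step, the stream passed through exactly `d m`
distinct examples at some earlier time, from which on `G m` is correct.
-/

theorem Nat.exists_le_eq_of_le_of_succ_le (f : ℕ → ℕ) (h0 : f 0 = 0)
    (hstep : ∀ t, f (t + 1) ≤ f t + 1) {s d : ℕ} (hd : d ≤ f s) : ∃ t ≤ s, f t = d := by
  induction s with
  | zero => exact ⟨0, le_rfl, by omega⟩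
  | succ s ih =>
    by_cases hds : d ≤ f s
    · obtain ⟨t, hts, hft⟩ := ih hds
      exact ⟨t, hts.trans s.le_succ, hft⟩
    · exact ⟨s + 1, le_rfl, by have := hstep s; omega⟩

section SeenSet

variable (x : ℕ → X)

theorem seenSet_zero : seenSet x 0 = ∅ := by
  simp [seenSet]

theorem seenSet_succ (t : ℕ) : seenSet x (t + 1) = insert (x t) (seenSet x t) := by
  simp only [seenSet, Nat.lt_succ_iff_lt_or_eq, ofPred_or, image_union, ofPred_eq_eq_singleton,
    image_singleton, union_comm, insert_eq]

theorem seenSet_finite (t : ℕ) : (seenSet x t).Finite :=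
  (finite_Iio t).image x

theorem ncard_seenSet_mono {t s : ℕ} (hts : t ≤ s) :
    (seenSet x t).ncard ≤ (seenSet x s).ncard :=
  ncard_le_ncard (image_mono fun _ (hi : _ < t) => hi.trans_le hts) (seenSet_finite x s)

theorem exists_le_ncard_seenSet_eq {s d : ℕ} (hd : d ≤ (seenSet x s).ncard) :
    ∃ t ≤ s, (seenSet x t).ncard = d :=
  Nat.exists_le_eq_of_le_of_succ_le (fun t => (seenSet x t).ncard)
    (by rw [seenSet_zero, ncard_empty])
    (fun t => by rw [seenSet_succ]; exact ncard_insert_le _ _) hd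

theorem card_toFinset_prefList [DecidableEq X] (s : ℕ) :
    (prefList x s).toFinset.card = (seenSet x s).ncard := by
  have hseen : seenSet x s = ↑(prefList x s).toFinset := by
    ext y
    simp [seenSet, prefList, Fin.exists_iff]
  rw [hseen, ncard_coe_finset]

end SeenSet

theorem genOK_of_le_ncard_seenSet {G : List X → X} {h : Set X} {x : ℕ → X}
    {d : ℕ} (hG : ∀ t, (seenSet x t).ncard = d → ∀ s, t ≤ s → GenOK G h x s) {s : ℕ}
    (hs : d ≤ (seenSet x s).ncard) : GenOK G h x s := by
  obtain ⟨t, hts, ht⟩ := exists_le_ncard_seenSet_eq x hs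
  exact hG t ht s hts

theorem nonUniformlyGeneratable_iUnion {Hs : ℕ → Set (Set X)} (hmono : Monotone Hs)
    (hunif : ∀ n, UniformlyGeneratable (Hs n)) : NonUniformlyGeneratable (⋃ n, Hs n) := by
  classical
  choose G d hG using hunif
  let m : ℕ → ℕ := fun k => Nat.findGreatest (fun n => d n ≤ k) k
  refine ⟨fun l => G (m l.toFinset.card) l, ?_⟩
  rintro h ⟨_, ⟨n, rfl⟩, hn⟩
  refine ⟨max n (d n), fun x hx t ht s hts => ?_⟩
  set k := (seenSet x s).ncard
  have hk : max n (d n) ≤ k := ht ▸ ncard_seenSet_mono x hts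
  have hnk : n ≤ k := le_of_max_le_left hk
  have hdk : d n ≤ k := le_of_max_le_right hk
  have hmem : h ∈ Hs (m k) := hmono (Nat.le_findGreatest hnk hdk) hn
  have hdmk : d (m k) ≤ k := Nat.findGreatest_spec (P := fun n => d n ≤ k) hnk hdk
  show G (m (prefList x s).toFinset.card) (prefList x s) ∈ h \ seenSet x s
  rw [card_toFinset_prefList]
  exact genOK_of_le_ncard_seenSet (hG (m k) h hmem x hx) hdmk

theorem stmt6_general {X : Type*} (H : Set (Set X)) (Hs : ℕ → Set (Set X))
    (hmono : Monotone Hs) (hun : (⋃ n, Hs n) = H)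
    (hunif : ∀ n, UniformlyGeneratable (Hs n)) :
    NonUniformlyGeneratable H :=
  hun ▸ nonUniformlyGeneratable_iUnion hmono hunif

/-- a non-decreasing union of uniformly generatable classes is
non-uniformly generatable. -/
theorem stmt6 {X : Type*} [Countable X] (H : Set (Set X)) (Hs : ℕ → Set (Set X))
    (hUUS : UUS H) (hmono : Monotone Hs) (hun : (⋃ n, Hs n) = H)
    (hunif : ∀ n, UniformlyGeneratable (Hs n)) :
    NonUniformlyGeneratable H :=
  stmt6_general H Hs hmono hun hunif
end

section
/- Let X = ℤ, let E be the set of negative even integers and O the set of negative odd integers. For d ∈ ℕ let A_d = {d(d-1)/2 + 1, ..., d(d-1)/2 + d}. Define H^e = {x ↦ 1[x ∈ A_d ∪ E] : d ∈ ℕ} and H^o = {x ↦ 1[x ∈ A_d ∪ O] : d ∈ ℕ}, and H = H^e ∪ H^o. Then H satisfies UUS and C(H) = ∞; in particular, for every d ∈ ℕ, the closure of the d distinct examples forming A_d with respect to H equals A_d itself, which is finite. -/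
open Set

variable {X : Type*}

/-- The block `A_d = {d(d-1)/2 + 1, ..., d(d-1)/2 + d}` as a subset of `ℤ`. -/
def Ablock (d : ℕ) : Set ℤ :=
  {x : ℤ | (d : ℤ) * ((d : ℤ) - 1) / 2 + 1 ≤ x ∧ x ≤ (d : ℤ) * ((d : ℤ) - 1) / 2 + (d : ℤ)}

/-- The negative even integers. -/
def Eneg : Set ℤ := {x : ℤ | x < 0 ∧ Even x}

/-- The negative odd integers. -/
def Oneg : Set ℤ := {x : ℤ | x < 0 ∧ Odd x}

/-- `H^e = {x ↦ 1[x ∈ A_d ∪ E] : d ∈ ℕ}`. -/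
def He : Set (Set ℤ) := {h | ∃ d : ℕ, 1 ≤ d ∧ h = Ablock d ∪ Eneg}

/-- `H^o = {x ↦ 1[x ∈ A_d ∪ O] : d ∈ ℕ}`. -/
def Ho : Set (Set ℤ) := {h | ∃ d : ℕ, 1 ≤ d ∧ h = Ablock d ∪ Oneg}

/-- `H = H^e ∪ H^o`. -/
def Hblocks : Set (Set ℤ) := He ∪ Ho

theorem subset_hclosure (H : Set (Set X)) (S : Set X) : S ⊆ hclosure H S :=
  fun _ hx _ hh => hh.2 hx

theorem hclosure_subset_of_mem_versionSpace {H : Set (Set X)} {S h : Set X}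
    (hh : h ∈ versionSpace H S) : hclosure H S ⊆ h :=
  sInter_subset_of_mem hh

theorem finClosureWitness_of_finite {H : Set (Set X)} {S : Set X} (hS : S.Finite)
    (hV : (versionSpace H S).Nonempty) (hC : (hclosure H S).Finite) :
    FinClosureWitness H S.ncard :=
  ⟨hS.toFinset, (ncard_eq_toFinset_card S hS).symm, by rwa [hS.coe_toFinset],
    by rwa [hS.coe_toFinset]⟩

theorem Ablock_eq_Icc (d : ℕ) :
    Ablock d = Icc ((d : ℤ) * ((d : ℤ) - 1) / 2 + 1) ((d : ℤ) * ((d : ℤ) - 1) / 2 + d) :=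
  rfl

theorem Ablock_finite (d : ℕ) : (Ablock d).Finite :=
  finite_Icc _ _

theorem Ablock_ncard (d : ℕ) : (Ablock d).ncard = d := by
  rw [Ablock_eq_Icc, ← Finset.coe_Icc, ncard_coe_finset, Int.card_Icc]
  omega

theorem Eneg_infinite : Eneg.Infinite :=
  infinite_of_forall_exists_lt fun a =>
    ⟨2 * (-|a| - 1), ⟨by linarith [abs_nonneg a], even_two_mul _⟩,
      by linarith [neg_abs_le a, abs_nonneg a]⟩

theorem Oneg_infinite : Oneg.Infinite :=
  infinite_of_forall_exists_lt fun a =>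
    ⟨2 * (-|a| - 1) + 1, ⟨by linarith [abs_nonneg a], odd_two_mul_add_one _⟩,
      by linarith [neg_abs_le a, abs_nonneg a]⟩

theorem disjoint_Eneg_Oneg : Disjoint Eneg Oneg :=
  disjoint_left.2 fun _ he ho => Int.not_even_iff_odd.2 ho.2 he.2

theorem uus_Hblocks : UUS Hblocks := by
  rintro h (⟨d, -, rfl⟩ | ⟨d, -, rfl⟩)
  · exact Eneg_infinite.mono subset_union_right
  · exact Oneg_infinite.mono subset_union_right

theorem Ablock_union_Eneg_mem_versionSpace {d : ℕ} (hd : 1 ≤ d) :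
    Ablock d ∪ Eneg ∈ versionSpace Hblocks (Ablock d) :=
  ⟨Or.inl ⟨d, hd, rfl⟩, subset_union_left⟩

theorem Ablock_union_Oneg_mem_versionSpace {d : ℕ} (hd : 1 ≤ d) :
    Ablock d ∪ Oneg ∈ versionSpace Hblocks (Ablock d) :=
  ⟨Or.inr ⟨d, hd, rfl⟩, subset_union_left⟩

theorem hclosure_Hblocks_Ablock {d : ℕ} (hd : 1 ≤ d) :
    hclosure Hblocks (Ablock d) = Ablock d := by
  refine (subset_hclosure _ _).antisymm' fun x hx => ?_
  have hEO : x ∈ (Ablock d ∪ Eneg) ∩ (Ablock d ∪ Oneg) :=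
    ⟨hclosure_subset_of_mem_versionSpace (Ablock_union_Eneg_mem_versionSpace hd) hx,
      hclosure_subset_of_mem_versionSpace (Ablock_union_Oneg_mem_versionSpace hd) hx⟩
  rwa [← union_inter_distrib_left, disjoint_Eneg_Oneg.inter_eq, union_empty] at hEO

theorem closureDimInf_Hblocks : ClosureDimInf Hblocks := by
  intro n
  have hd : 1 ≤ max n 1 := le_max_right n 1
  refine ⟨max n 1, le_max_left n 1, ?_⟩
  rw [← Ablock_ncard (max n 1)]
  exact finClosureWitness_of_finite (Ablock_finite _)
    ⟨_, Ablock_union_Eneg_mem_versionSpace hd⟩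
    (by rw [hclosure_Hblocks_Ablock hd]; exact Ablock_finite _)

/-- `Hblocks` satisfies UUS and has infinite Closure dimension;
for every `d ≥ 1`, the closure of the `d` distinct examples forming `A_d`
equals `A_d` itself, which is finite. -/
theorem stmt9 :
    UUS Hblocks ∧ ClosureDimInf Hblocks ∧
    ∀ d : ℕ, 1 ≤ d →
      (Ablock d).Finite ∧ (Ablock d).ncard = d ∧ hclosure Hblocks (Ablock d) = Ablock d :=
  ⟨uus_Hblocks, closureDimInf_Hblocks,
    fun d hd => ⟨Ablock_finite d, Ablock_ncard d, hclosure_Hblocks_Ablock hd⟩⟩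
end

section
/- Let X = ℤ and H = {x ↦ 1[x ∈ A or x ≤ 0] : A ⊆ ℕ} ∪ {x ↦ 1[x ∈ ℕ]}. Then H satisfies UUS and is generatable in the limit: there is a generator G such that for every h ∈ H and every enumeration x₁, x₂, ... of supp(h), there exists t* such that G(x₁,...,x_s) ∈ supp(h) \ {x₁,...,x_s} for all s ≥ t*. -/
open Set

variable {X : Type*}

/-- The class `{x ↦ 1[x ∈ A or x ≤ 0] : A ⊆ ℕ} ∪ {x ↦ 1[x ∈ ℕ]}` over `ℤ`. -/
def Hmix : Set (Set ℤ) :=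
  {h | ∃ A : Set ℤ, (∀ a ∈ A, 0 < a) ∧ h = A ∪ {x : ℤ | x ≤ 0}} ∪ {{x : ℤ | 0 < x}}


/-- Max of a list of integers, at least 0. -/
def listMax (l : List ℤ) : ℤ := l.foldr max 0

lemma le_listMax {l : List ℤ} {a : ℤ} (h : a ∈ l) : a ≤ listMax l := by
  induction l with
  | nil => simp at h
  | cons b t ih =>
    rcases List.mem_cons.1 h with rfl | h
    · exact le_max_left _ _
    · exact le_trans (ih h) (le_max_right _ _)

lemma listMax_nonneg (l : List ℤ) : 0 ≤ listMax l := by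
  induction l with
  | nil => simp [listMax]
  | cons b t ih => exact le_trans ih (le_max_right _ _)

/-- Max of absolute values. -/
def listAbsMax (l : List ℤ) : ℤ := listMax (l.map (fun a => |a|))

lemma abs_le_listAbsMax {l : List ℤ} {a : ℤ} (h : a ∈ l) : |a| ≤ listAbsMax l :=
  le_listMax (List.mem_map_of_mem (f := fun a => |a|) h)

/-- The generator. -/
def Gmix (l : List ℤ) : ℤ :=
  if ∀ a ∈ l, 0 < a then listMax l + 1 else -(listAbsMax l) - 1

lemma mem_prefList {x : ℕ → ℤ} {s : ℕ} {y : ℤ} :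
    y ∈ prefList x s ↔ ∃ i < s, x i = y := by
  simp [prefList, List.mem_ofFn]
  constructor
  · rintro ⟨i, rfl⟩; exact ⟨i, i.2, rfl⟩
  · rintro ⟨i, hi, rfl⟩; exact ⟨⟨i, hi⟩, rfl⟩

lemma mem_seenSet {x : ℕ → ℤ} {s : ℕ} {y : ℤ} :
    y ∈ seenSet x s ↔ ∃ i < s, x i = y := by
  simp [seenSet]

/-- `Hmix` satisfies UUS and is generatable in the limit. -/
theorem stmt11 : UUS Hmix ∧ GeneratableInLimit Hmix := by
  constructor
  · -- UUS
    rintro h (⟨A, hA, rfl⟩ | rfl)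
    · apply Set.Infinite.mono (Set.subset_union_right)
      apply Set.infinite_of_injective_forall_mem (f := fun n : ℕ => (-(n : ℤ)))
      · intro a b hab
        simpa using hab
      · intro n; simp [Set.mem_setOf_eq]
    · apply Set.infinite_of_injective_forall_mem (f := fun n : ℕ => ((n : ℤ) + 1))
      · intro a b hab; simpa using hab
      · intro n; simp [Set.mem_setOf_eq]
  · refine ⟨Gmix, ?_⟩
    rintro h (⟨A, hA, rfl⟩ | rfl) x hx
    ·
      obtain ⟨i, hi⟩ := hx.2 0 (Or.inr (by simp))
      refine ⟨i + 1, fun s hs => ?_⟩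
      have hmem : (0 : ℤ) ∈ prefList x s :=
        mem_prefList.2 ⟨i, lt_of_lt_of_le (Nat.lt_succ_self i) hs, hi⟩
      have hneg : ¬ ∀ a ∈ prefList x s, 0 < a := fun H => absurd (H 0 hmem) (lt_irrefl 0)
      have hG : Gmix (prefList x s) = -(listAbsMax (prefList x s)) - 1 := if_neg hneg
      constructor
      · right
        rw [hG]
        have := listMax_nonneg ((prefList x s).map (fun a => |a|))
        simp only [Set.mem_setOf_eq, listAbsMax] at *
        omega
      · intro hc
        obtain ⟨j, hj, hje⟩ := mem_seenSet.1 hc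
        have h1 : |x j| ≤ listAbsMax (prefList x s) :=
          abs_le_listAbsMax (mem_prefList.2 ⟨j, hj, rfl⟩)
        rw [hje, hG] at h1
        have h2 := abs_nonneg (Gmix (prefList x s))
        rw [hG] at h2
        have h3 : |-(listAbsMax (prefList x s)) - 1| = listAbsMax (prefList x s) + 1 := by
          have := listMax_nonneg ((prefList x s).map (fun a => |a|))
          simp only [listAbsMax]
          rw [abs_of_nonpos] <;> omega
        rw [h3] at h1
        omega
    · -- h = {0 < x}
      refine ⟨0, fun s _ => ?_⟩
      have hpos : ∀ a ∈ prefList x s, 0 < a := by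
        intro a ha
        obtain ⟨i, _, rfl⟩ := mem_prefList.1 ha
        exact hx.1 i
      have hG : Gmix (prefList x s) = listMax (prefList x s) + 1 := if_pos hpos
      constructor
      · rw [hG]
        have := listMax_nonneg (prefList x s)
        simp only [Set.mem_setOf_eq]; omega
      · intro hc
        obtain ⟨j, hj, hje⟩ := mem_seenSet.1 hc
        have h1 : x j ≤ listMax (prefList x s) := le_listMax (mem_prefList.2 ⟨j, hj, rfl⟩)
        rw [hje, hG] at h1
        omega
end

section
/- Let X = ℤ and H = {x ↦ 1[x ∈ A or x ≤ 0] : A ⊆ ℕ} ∪ {x ↦ 1[x ∈ ℕ]}. Then H is not non-uniformly generatable: for every generator G there exists h ∈ H such that for every d ∈ ℕ there is a sequence x₁, x₂, ... ⊆ supp(h) containing exactly d distinct elements at some time t, but G(x₁,...,x_s) ∉ supp(h) \ {x₁,...,x_s} for some s ≥ t. -/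
open Set

variable {X : Type*}

namespace Stmt12Aux

/-- A "fresh" positive integer avoiding the list `l` and all values `G (l.take D)`. -/
def fresh (G : List ℤ → ℤ) (l : List ℤ) : ℤ :=
  ((l ++ (List.range (l.length + 1)).map fun D => G (l.take D)).foldr max 0) + 1

lemma le_foldr_max (l : List ℤ) : ∀ z ∈ l, z ≤ l.foldr max 0 := by
  induction l with
  | nil => simp
  | cons a t ih =>
    intro z hz
    rcases List.mem_cons.1 hz with h | h
    · simp [h, le_max_left]
    · exact le_trans (ih z h) (le_max_right _ _)

lemma foldr_max_nonneg (l : List ℤ) : 0 ≤ l.foldr max 0 := by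
  induction l with
  | nil => simp
  | cons a t ih => exact le_trans ih (le_max_right _ _)

lemma fresh_pos (G : List ℤ → ℤ) (l : List ℤ) : 0 < fresh G l :=
  lt_of_le_of_lt (foldr_max_nonneg _) (lt_add_one _)

lemma fresh_not_mem (G : List ℤ → ℤ) (l : List ℤ) : fresh G l ∉ l := by
  intro h
  have := le_foldr_max
    (l ++ (List.range (l.length + 1)).map fun D => G (l.take D)) _
    (List.mem_append_left _ h)
  simp only [fresh] at this
  omega

lemma fresh_ne_take (G : List ℤ → ℤ) (l : List ℤ) (D : ℕ) (hD : D ≤ l.length) :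
    fresh G l ≠ G (l.take D) := by
  intro h
  have hm : G (l.take D) ∈ (l ++ (List.range (l.length + 1)).map fun D => G (l.take D)) := by
    refine List.mem_append_right _ (List.mem_map.2 ⟨D, ?_, rfl⟩)
    exact List.mem_range.2 (by omega)
  have := le_foldr_max _ _ hm
  rw [← h] at this
  simp only [fresh] at this
  omega

/-- The growing list of chosen positive examples. -/
def gseq (G : List ℤ → ℤ) : ℕ → List ℤ
  | 0 => []
  | n + 1 => gseq G n ++ [fresh G (gseq G n)]

/-- The chosen examples as a sequence. -/
def aseq (G : List ℤ → ℤ) (n : ℕ) : ℤ := fresh G (gseq G n)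

lemma gseq_length (G : List ℤ → ℤ) (n : ℕ) : (gseq G n).length = n := by
  induction n with
  | zero => rfl
  | succ n ih => simp [gseq, ih]

lemma gseq_getElem (G : List ℤ → ℤ) (n i : ℕ) (hi : i < n)
    (h : i < (gseq G n).length) : (gseq G n)[i] = aseq G i := by
  induction n with
  | zero => omega
  | succ n ih =>
    show (gseq G n ++ [fresh G (gseq G n)])[i]'(by simpa [gseq] using h) = aseq G i
    rcases Nat.lt_or_ge i n with h' | h'
    · rw [List.getElem_append_left (as := gseq G n) (by rw [gseq_length]; exact h')]
      exact ih h' _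
    · have hin : i = n := by omega
      subst hin
      rw [List.getElem_append_right (as := gseq G i) (by rw [gseq_length])]
      simp [gseq_length, aseq]

lemma gseq_eq_ofFn (G : List ℤ → ℤ) (n : ℕ) :
    gseq G n = List.ofFn (fun i : Fin n => aseq G i) := by
  apply List.ext_getElem
  · simp [gseq_length]
  · intro i h1 h2
    rw [List.getElem_ofFn]
    exact gseq_getElem G n i (by rw [gseq_length] at h1; exact h1) h1

lemma gseq_take (G : List ℤ → ℤ) {D n : ℕ} (h : D ≤ n) :
    (gseq G n).take D = gseq G D := by
  apply List.ext_getElem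
  · simp [gseq_length]; omega
  · intro i h1 h2
    rw [List.getElem_take]
    have hi : i < D := by simpa [gseq_length, Nat.min_eq_left h] using h1
    rw [gseq_getElem G n i (by omega), gseq_getElem G D i hi]

lemma aseq_pos (G : List ℤ → ℤ) (n : ℕ) : 0 < aseq G n := fresh_pos _ _

lemma aseq_not_mem (G : List ℤ → ℤ) (n : ℕ) : aseq G n ∉ gseq G n := fresh_not_mem _ _

lemma mem_gseq_iff (G : List ℤ → ℤ) (n : ℕ) (z : ℤ) :
    z ∈ gseq G n ↔ ∃ i < n, aseq G i = z := by
  rw [gseq_eq_ofFn, List.mem_ofFn]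
  constructor
  · rintro ⟨i, rfl⟩; exact ⟨i, i.isLt, rfl⟩
  · rintro ⟨i, hi, rfl⟩; exact ⟨⟨i, hi⟩, rfl⟩

lemma aseq_injective (G : List ℤ → ℤ) : Function.Injective (aseq G) := by
  intro i j h
  by_contra hne
  wlog hij : i < j generalizing i j
  · exact this h.symm (Ne.symm hne) (by omega)
  exact aseq_not_mem G j ((mem_gseq_iff G j _).2 ⟨i, hij, h⟩)

lemma aseq_ne_G_gseq (G : List ℤ → ℤ) {D n : ℕ} (h : D ≤ n) :
    aseq G n ≠ G (gseq G D) := by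
  have := fresh_ne_take G (gseq G n) D (by rw [gseq_length]; exact h)
  rwa [gseq_take G h] at this

end Stmt12Aux





open Stmt12Aux in
theorem stmt12_main (G : List ℤ → ℤ) : ∃ h ∈ Hmix, ∀ d : ℕ, ∃ x : ℕ → ℤ, (∀ i, x i ∈ h) ∧
    ∃ t : ℕ, (seenSet x t).ncard = d ∧ ∃ s, t ≤ s ∧ ¬ GenOK G h x s := by
  by_cases hP : ∃ d₀ : ℕ, ∀ x : ℕ → ℤ, (∀ i, x i ∈ {z : ℤ | 0 < z}) →
      ∀ t, (seenSet x t).ncard = d₀ → ∀ s, t ≤ s → GenOK G {z : ℤ | 0 < z} x s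
  · -- adversarial construction
    obtain ⟨d₀, hd₀⟩ := hP
    set A : Set ℤ := Set.range (aseq G) with hA
    refine ⟨A ∪ {x : ℤ | x ≤ 0}, Or.inl ⟨A, ?_, rfl⟩, ?_⟩
    · rintro a ⟨n, rfl⟩; exact aseq_pos G n
    intro d
    set D : ℕ := max (max d d₀) 1 with hD
    have hD1 : 1 ≤ D := le_max_right _ _
    have hdD : d ≤ D := le_trans (le_max_left _ _) (le_max_left _ _)
    have hd₀D : d₀ ≤ D := le_trans (le_max_right _ _) (le_max_left _ _)
    set x : ℕ → ℤ := fun i => aseq G (min i (D - 1)) with hx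
    have hxh : ∀ i, x i ∈ A ∪ {z : ℤ | z ≤ 0} := fun i => Or.inl ⟨_, rfl⟩
    have hseen : ∀ t ≤ D, seenSet x t = aseq G '' {i | i < t} := by
      intro t ht
      unfold seenSet
      apply Set.image_congr
      intro i hi
      simp only [Set.mem_setOf_eq] at hi
      have : min i (D - 1) = i := by omega
      rw [hx]; simp only [this]
    have hncard : ∀ t ≤ D, (seenSet x t).ncard = t := by
      intro t ht
      rw [hseen t ht, Set.ncard_image_of_injective _ (aseq_injective G)]
      have : {i : ℕ | i < t} = ↑(Finset.range t) := by
        ext i; simp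
      rw [this, Set.ncard_coe_finset, Finset.card_range]
    have hpref : prefList x D = gseq G D := by
      rw [gseq_eq_ofFn]
      unfold prefList
      congr 1
      funext i
      have hi := i.isLt
      show aseq G (min (i : ℕ) (D - 1)) = aseq G (i : ℕ)
      congr 1
      omega
    have hok : GenOK G {z : ℤ | 0 < z} x D :=
      hd₀ x (fun i => aseq_pos G _) d₀ (hncard d₀ hd₀D) D hd₀D
    obtain ⟨hzpos, hzseen⟩ := hok
    set z : ℤ := G (prefList x D) with hz
    refine ⟨x, hxh, d, hncard d hdD, D, hdD, ?_⟩
    rintro ⟨hzh, -⟩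
    rcases hzh with hzA | hzle
    · obtain ⟨n, hn⟩ := hzA
      rcases Nat.lt_or_ge n D with hnD | hnD
      · exact hzseen ⟨n, by simp only [Set.mem_setOf_eq]; omega, by
          rw [hx]; simp only [Nat.min_eq_left (by omega : n ≤ D - 1)]; exact hn⟩
      · exact aseq_ne_G_gseq G hnD (by rw [← hpref]; exact hn)
    · simp only [Set.mem_setOf_eq] at hzpos hzle
      omega
  · -- the hypothesis {z | 0 < z} itself is a witness
    push_neg at hP
    refine ⟨{z : ℤ | 0 < z}, Or.inr rfl, ?_⟩
    intro d
    obtain ⟨x, hx, t, ht, s, hs, hbad⟩ := hP d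
    exact ⟨x, hx, t, ht, s, hs, hbad⟩


/-- `Hmix` is not non-uniformly generatable: for every generator `G`
there is `h ∈ Hmix` such that for every `d` there is a stream in `supp h` with
exactly `d` distinct elements at some time `t`, yet `G` errs at some `s ≥ t`. -/
theorem stmt12 :
    ¬ NonUniformlyGeneratable Hmix ∧
    ∀ G : List ℤ → ℤ, ∃ h ∈ Hmix, ∀ d : ℕ, ∃ x : ℕ → ℤ, (∀ i, x i ∈ h) ∧
      ∃ t : ℕ, (seenSet x t).ncard = d ∧ ∃ s, t ≤ s ∧ ¬ GenOK G h x s := by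
  refine ⟨?_, stmt12_main⟩
  rintro ⟨G, hG⟩
  obtain ⟨h, hH, hbad⟩ := stmt12_main G
  obtain ⟨d, hd⟩ := hG h hH
  obtain ⟨x, hxh, t, ht, s, hs, hnok⟩ := hbad d
  exact hnok (hd x hxh t ht s hs)
end

section
/- Uniform generatability is not closed under finite unions: there exist classes H₁, H₂ over X = ℤ with C(H₁) = C(H₂) = 0 (hence both uniformly generatable) such that H₁ ∪ H₂ is not even non-uniformly generatable. Concretely, H₁ = {x ↦ 1[x ∈ A or x ≤ 0] : A ⊆ ℕ} and H₂ = {x ↦ 1[x ∈ ℕ]}. -/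
open Set

variable {X : Type*}

/-- The singleton class `{x ↦ 1[x ∈ ℕ]}`. -/
def Hnat : Set (Set ℤ) := {{x : ℤ | 0 < x}}

/-! ### Auxiliary material -/

def maxZ (l : List ℤ) : ℤ := l.foldr max 0

lemma maxZ_nonneg (l : List ℤ) : 0 ≤ maxZ l := by
  induction l with
  | nil => simp [maxZ]
  | cons a l ih => exact le_trans ih (le_max_right _ _)

lemma le_maxZ {l : List ℤ} {a : ℤ} (h : a ∈ l) : a ≤ maxZ l := by
  induction l with
  | nil => simp at h
  | cons b l ih =>
    rcases List.mem_cons.1 h with rfl | h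
    · exact le_max_left _ _
    · exact le_trans (ih h) (le_max_right _ _)

def minZ (l : List ℤ) : ℤ := l.foldr min 0

lemma minZ_nonpos (l : List ℤ) : minZ l ≤ 0 := by
  induction l with
  | nil => simp [minZ]
  | cons a l ih => exact le_trans (min_le_right _ _) ih

lemma minZ_le {l : List ℤ} {a : ℤ} (h : a ∈ l) : minZ l ≤ a := by
  induction l with
  | nil => simp at h
  | cons b l ih =>
    rcases List.mem_cons.1 h with rfl | h
    · exact min_le_left _ _
    · exact le_trans (min_le_right _ _) (ih h)

/-- Next adversarial example: larger than everything seen so far and than all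
possible outputs of `G` on prefixes of the current history. -/
def advStep (G : List ℤ → ℤ) (l : List ℤ) : ℤ :=
  1 + maxZ (l ++ (List.range (l.length + 1)).map fun j => G (l.take j))

/-- The adversarial history of length `k`. -/
def advL (G : List ℤ → ℤ) : ℕ → List ℤ
  | 0 => []
  | k + 1 => advL G k ++ [advStep G (advL G k)]

lemma advL_length (G : List ℤ → ℤ) (k : ℕ) : (advL G k).length = k := by
  induction k with
  | zero => rfl
  | succ k ih => simp [advL, ih]

lemma advL_eq_prefList (G : List ℤ → ℤ) (k : ℕ) :
    advL G k = prefList (fun n => advStep G (advL G n)) k := by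
  induction k with
  | zero => simp [advL, prefList]
  | succ k ih =>
    rw [prefList, List.ofFn_succ']
    simp only [List.concat_eq_append, Fin.val_last, Fin.coe_castSucc]
    rw [advL, ih]
    rfl

lemma advL_take (G : List ℤ → ℤ) {s k : ℕ} (h : s ≤ k) :
    (advL G k).take s = advL G s := by
  induction k with
  | zero =>
    have : s = 0 := Nat.le_zero.mp h
    subst this; rfl
  | succ k ih =>
    rcases Nat.lt_or_ge s (k + 1) with hlt | hge
    · have hs : s ≤ k := Nat.lt_succ_iff.mp hlt
      rw [advL, List.take_append_of_le_length (by rw [advL_length]; exact hs)]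
      exact ih hs
    · have : s = k + 1 := le_antisymm h hge
      subst this
      rw [List.take_of_length_le (by rw [advL_length])]

lemma lt_advStep_of_mem {G : List ℤ → ℤ} {l : List ℤ} {a : ℤ} (h : a ∈ l) :
    a < advStep G l := by
  have := le_maxZ (List.mem_append_left ((List.range (l.length + 1)).map fun j => G (l.take j)) h)
  unfold advStep; omega

lemma output_lt_advStep (G : List ℤ → ℤ) {s : ℕ} (l : List ℤ) (h : s ≤ l.length) :
    G (l.take s) < advStep G l := by
  have hmem : G (l.take s) ∈ (List.range (l.length + 1)).map fun j => G (l.take j) :=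
    List.mem_map.2 ⟨s, List.mem_range.2 (by omega), rfl⟩
  have := le_maxZ (List.mem_append_right l hmem)
  unfold advStep; omega

lemma advStep_pos (G : List ℤ → ℤ) (l : List ℤ) : 0 < advStep G l := by
  have := maxZ_nonneg (l ++ (List.range (l.length + 1)).map fun j => G (l.take j))
  unfold advStep; omega

lemma mem_prefList_s13 {x : ℕ → X} {s : ℕ} {i : ℕ} (hi : i < s) : x i ∈ prefList x s :=
  List.mem_ofFn.2 ⟨⟨i, hi⟩, rfl⟩

lemma mem_seenSet_s13 {x : ℕ → X} {s : ℕ} {i : ℕ} (hi : i < s) : x i ∈ seenSet x s :=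
  ⟨i, hi, rfl⟩

/-- uniform generatability is not closed under finite unions:
`C(Hup) = C(Hnat) = 0` (both uniformly generatable), yet `Hup ∪ Hnat` is not
even non-uniformly generatable. -/
theorem stmt13 :
    ClosureDimLE Hup 0 ∧ ClosureDimLE Hnat 0 ∧
    UniformlyGeneratable Hup ∧ UniformlyGeneratable Hnat ∧
    ¬ NonUniformlyGeneratable (Hup ∪ Hnat) := by
  refine ⟨?_, ?_, ?_, ?_, ?_⟩
  · -- ClosureDimLE Hup 0
    rintro d' _ ⟨S, -, -, hfin⟩
    have hsub : Set.Iic (0 : ℤ) ⊆ hclosure Hup ↑S := by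
      intro z hz
      refine Set.mem_sInter.2 ?_
      rintro g ⟨⟨A, -, rfl⟩, -⟩
      exact Or.inr hz
    exact ((Set.Iic_infinite (0 : ℤ)).mono hsub) hfin
  · -- ClosureDimLE Hnat 0
    rintro d' _ ⟨S, -, -, hfin⟩
    have hsub : Set.Ioi (0 : ℤ) ⊆ hclosure Hnat ↑S := by
      intro z hz
      refine Set.mem_sInter.2 ?_
      rintro g ⟨hg, -⟩
      rw [Hnat, Set.mem_singleton_iff] at hg
      subst hg
      exact hz
    exact ((Set.Ioi_infinite (0 : ℤ)).mono hsub) hfin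
  · -- UniformlyGeneratable Hup
    refine ⟨fun l => minZ l - 1, 0, ?_⟩
    rintro h ⟨A, -, rfl⟩ x hx t - s -
    constructor
    · refine Or.inr ?_
      show minZ (prefList x s) - 1 ≤ 0
      have := minZ_nonpos (prefList x s)
      omega
    · rintro ⟨i, hi, hxi⟩
      have h2 := minZ_le (mem_prefList_s13 (x := x) hi)
      have h3 : x i = minZ (prefList x s) - 1 := hxi
      omega
  · -- UniformlyGeneratable Hnat
    refine ⟨fun l => maxZ l + 1, 0, ?_⟩
    rintro h hh x hx t - s -
    rw [Hnat, Set.mem_singleton_iff] at hh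
    subst hh
    constructor
    · show (0:ℤ) < maxZ (prefList x s) + 1
      have := maxZ_nonneg (prefList x s)
      omega
    · rintro ⟨i, hi, hxi⟩
      have h2 := le_maxZ (mem_prefList_s13 (x := x) hi)
      have h3 : x i = maxZ (prefList x s) + 1 := hxi
      omega
  · -- not NonUniformlyGeneratable (Hup ∪ Hnat)
    rintro ⟨G, hG⟩
    set a : ℕ → ℤ := fun n => advStep G (advL G n) with ha
    have hpref : ∀ k, advL G k = prefList a k := advL_eq_prefList G
    have hmono : StrictMono a := by
      apply strictMono_nat_of_lt_succ
      intro k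
      exact lt_advStep_of_mem (by rw [advL]; exact List.mem_append_right _ (List.mem_singleton.2 rfl))
    have hpos : ∀ k, 0 < a k := fun k => advStep_pos G _
    have hbig : ∀ s k, s ≤ k → G (prefList a s) < a k := by
      intro s k hsk
      have h1 : prefList a s = (advL G k).take s := by
        rw [advL_take G hsk, hpref]
      rw [h1]
      exact output_lt_advStep G _ (by rw [advL_length]; exact hsk)
    have hncard : ∀ t, (seenSet a t).ncard = t := by
      intro t
      have h1 : {i : ℕ | i < t} = ↑(Finset.range t) := by ext i; simp
      rw [seenSet, Set.ncard_image_of_injective _ hmono.injective, h1,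
        Set.ncard_coe_finset, Finset.card_range]
    have hAmem : Set.range a ∪ {x : ℤ | x ≤ 0} ∈ Hup ∪ Hnat := by
      refine Or.inl ⟨Set.range a, ?_, rfl⟩
      rintro _ ⟨k, rfl⟩
      exact hpos k
    have hnatmem : {x : ℤ | 0 < x} ∈ Hup ∪ Hnat := Or.inr rfl
    obtain ⟨d₀, h0⟩ := hG _ hnatmem
    obtain ⟨dA, hA⟩ := hG _ hAmem
    set s := max d₀ dA with hs
    have g1 := h0 a (fun i => hpos i) d₀ (hncard d₀) s (le_max_left _ _)
    have g2 := hA a (fun i => Or.inl ⟨i, rfl⟩) dA (hncard dA) s (le_max_right _ _)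
    obtain ⟨hv1, hns⟩ := g1
    obtain ⟨hv2, -⟩ := g2
    have hvpos : (0 : ℤ) < G (prefList a s) := hv1
    have hrange : G (prefList a s) ∈ Set.range a := by
      rcases hv2 with h | h
      · exact h
      · exact absurd h (by simp only [Set.mem_setOf_eq]; omega)
    obtain ⟨k, hk⟩ := hrange
    rcases Nat.lt_or_ge k s with hks | hks
    · exact hns (hk ▸ mem_seenSet_s13 hks)
    · have := hbig s k hks
      omega
end

section
/- There exists a countable family of classes H₁, H₂, ... over a countable X, each satisfying UUS and with C(H_i) = 0 for all i, such that H = ⋃_{i ∈ ℕ} H_i is not generatable in the limit. Concretely, X = ℚ_{>0}, Q_i = {p/p_i : p prime}, and H_i = {x ↦ 1[x ∈ Q_i ∪ A] : A ⊆ ℚ_{>0}}. -/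
open Set

variable {X : Type*}

/-- `Q_i = {p / p_i : p prime}` as a subset of `ℚ`, where `p_i` is the `i`-th prime. -/
def Qrat (i : ℕ) : Set ℚ :=
  {q : ℚ | ∃ p : ℕ, p.Prime ∧ q = (p : ℚ) / (Nat.nth Nat.Prime i : ℚ)}

/-- `H_i = {x ↦ 1[x ∈ Q_i ∪ A] : A ⊆ ℚ_{>0}}`. -/
def Hrat (i : ℕ) : Set (Set ℚ) :=
  {h | ∃ A : Set ℚ, (∀ a ∈ A, 0 < a) ∧ h = Qrat i ∪ A}

/-! Every hypothesis in `Hrat i` contains the infinite set `Qrat i`, so `Hrat i` has unbounded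
supports and all its closures are infinite. Distinct `Qrat i` meet only in `1`, and this is all
the diagonalisation against a generator `G` needs. Stage `n` continues the stream built so far
with the marker `pₙ / p₀ ∈ Qrat 0` and then an enumeration of `Qrat n`; as `G` generates
`Qrat n ∪ (stream)` from this stream, some later time `sₙ` has `G` output an unseen element of
`Qrat n`. The limit stream enumerates `Qrat 0 ∪ (its range) ∈ Hrat 0`, but from `sₙ` on it only
lists elements of `Qrat 0` and of later `Qrat m`, so `G`'s output at time `sₙ` is `1`, which was
seen at time `0`. -/

lemma prefList_congr {x y : ℕ → X} {s : ℕ} (h : ∀ i < s, x i = y i) :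
    prefList x s = prefList y s :=
  List.ofFn_inj.mpr (funext fun i => h i i.2)

lemma isEnum_union_range {A : Set X} {w : ℕ → X} (h : A ⊆ range w) :
    IsEnum (A ∪ range w) w :=
  ⟨fun i => Or.inr ⟨i, rfl⟩, fun _ hy => union_subset h subset_rfl hy⟩

lemma mem_of_mem_union_range_diff_seenSet {Q : Set X} {w : ℕ → X} {s : ℕ} {o : X}
    (hw : ∀ i, s ≤ i → w i ∈ Q) (ho : o ∈ (Q ∪ range w) \ seenSet w s) : o ∈ Q := by
  obtain ⟨hQ | ⟨i, rfl⟩, hunseen⟩ := ho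
  · exact hQ
  · exact hw i (not_lt.mp fun hi => hunseen ⟨i, hi, rfl⟩)

lemma exists_le_lt_succ_of_strictMono {f : ℕ → ℕ} (hf : StrictMono f) {i : ℕ} (hi : f 0 ≤ i) :
    ∃ m, f m ≤ i ∧ i < f (m + 1) := by
  have hex : ∃ m, i < f (m + 1) := ⟨i, (Nat.lt_succ_self i).trans_le (hf.id_le (i + 1))⟩
  refine ⟨Nat.find hex, ?_, Nat.find_spec hex⟩
  cases hm : Nat.find hex with
  | zero => exact hi
  | succ m => exact not_lt.mp (Nat.find_min hex (hm ▸ Nat.lt_succ_self m))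

lemma uus_of_forall_subset {H : Set (Set X)} {Q : Set X} (hQ : Q.Infinite)
    (hH : ∀ h ∈ H, Q ⊆ h) : UUS H :=
  fun h hh => hQ.mono (hH h hh)

lemma not_finClosureWitness_of_forall_subset {H : Set (Set X)} {Q : Set X} (hQ : Q.Infinite)
    (hH : ∀ h ∈ H, Q ⊆ h) (d : ℕ) : ¬ FinClosureWitness H d :=
  fun ⟨_, _, _, hfin⟩ => hQ (hfin.subset (subset_sInter fun h hh => hH h hh.1))

section Diagonal

variable (G : List X → X) (e : ℕ → ℕ → X) (c : X)

-- `t + 1` is a junk value, used only when `G` fails to generate `h` from `w`.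
open scoped Classical in
noncomputable def nextTime (h : Set X) (w : ℕ → X) (t : ℕ) : ℕ :=
  if hT : ∃ T, ∀ s, T ≤ s → GenOK G h w s then max hT.choose t + 1 else t + 1

lemma lt_nextTime (h : Set X) (w : ℕ → X) (t : ℕ) : t < nextTime G h w t := by
  unfold nextTime
  split_ifs <;> omega

lemma genOK_nextTime {h : Set X} {w : ℕ → X} (t : ℕ)
    (hT : ∃ T, ∀ s, T ≤ s → GenOK G h w s) : GenOK G h w (nextTime G h w t) := by
  rw [nextTime, dif_pos hT]
  exact hT.choose_spec _ (by omega)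

def diagStream (n t : ℕ) (y : ℕ → X) : ℕ → X := fun i =>
  if i < t then y i else if i = t then e 0 n else e n (i - t - 1)

variable {e} in
lemma diagStream_of_lt {n t i : ℕ} (y : ℕ → X) (hi : i < t) : diagStream e n t y i = y i :=
  if_pos hi

lemma diagStream_self (n t : ℕ) (y : ℕ → X) : diagStream e n t y t = e 0 n := by
  simp [diagStream]

variable {e} in
lemma diagStream_mem_of_lt {n t i : ℕ} (y : ℕ → X) (hi : t < i) :
    diagStream e n t y i ∈ range (e n) := by
  simp only [diagStream, if_neg (by omega : ¬i < t), if_neg (by omega : i ≠ t)]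
  exact mem_range_self _

lemma range_subset_range_diagStream (n t : ℕ) (y : ℕ → X) :
    range (e n) ⊆ range (diagStream e n t y) := by
  rintro _ ⟨k, rfl⟩
  refine ⟨t + 1 + k, ?_⟩
  simp only [diagStream, if_neg (by omega : ¬t + 1 + k < t), if_neg (by omega : t + 1 + k ≠ t)]
  congr 1
  omega

lemma diagStream_mem {U : Set X} (hU : ∀ n k, e n k ∈ U) {y : ℕ → X} (hy : ∀ i, y i ∈ U)
    (n t i : ℕ) : diagStream e n t y i ∈ U := by
  unfold diagStream
  split_ifs
  exacts [hy i, hU 0 n, hU n _]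

-- Position `0` holds `c`, the only point two of the ranges `range (e i)` may share.
noncomputable def diagStage : ℕ → ℕ × (ℕ → X)
  | 0 => (1, diagStream e 0 1 fun _ => c)
  | n + 1 =>
    let t := nextTime G (range (e n) ∪ range (diagStage n).2) (diagStage n).2 (diagStage n).1
    (t, diagStream e (n + 1) t (diagStage n).2)

noncomputable def stageTime (n : ℕ) : ℕ := (diagStage G e c n).1

noncomputable def stageStream (n : ℕ) : ℕ → X := (diagStage G e c n).2

noncomputable def diagLimit (i : ℕ) : X := stageStream G e c i i

local notation "τ" => stageTime G e c
local notation "ω" => stageStream G e c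

lemma stageStream_succ (n : ℕ) : ω (n + 1) = diagStream e (n + 1) (τ (n + 1)) (ω n) := rfl

lemma exists_stageStream_eq (n : ℕ) : ∃ y, ω n = diagStream e n (τ n) y := by
  cases n with
  | zero => exact ⟨_, rfl⟩
  | succ n => exact ⟨_, stageStream_succ G e c n⟩

lemma stageStream_stageTime (n : ℕ) : ω n (τ n) = e 0 n := by
  obtain ⟨y, hy⟩ := exists_stageStream_eq G e c n
  rw [hy, diagStream_self]

lemma stageStream_mem_of_lt {n i : ℕ} (hi : τ n < i) : ω n i ∈ range (e n) := by
  obtain ⟨y, hy⟩ := exists_stageStream_eq G e c n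
  rw [hy]
  exact diagStream_mem_of_lt y hi

lemma stageStream_mem_of_le {n i : ℕ} (hi : τ n ≤ i) : ω n i ∈ range (e 0) ∪ range (e n) := by
  rcases hi.eq_or_lt with rfl | hlt
  · exact Or.inl ⟨n, (stageStream_stageTime G e c n).symm⟩
  · exact Or.inr (stageStream_mem_of_lt G e c hlt)

lemma range_subset_range_stageStream (n : ℕ) : range (e n) ⊆ range (ω n) := by
  obtain ⟨y, hy⟩ := exists_stageStream_eq G e c n
  rw [hy]
  exact range_subset_range_diagStream e n _ y

lemma stageStream_mem {U : Set X} (hU : ∀ n k, e n k ∈ U) (hc : c ∈ U) (n i : ℕ) :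
    ω n i ∈ U := by
  induction n generalizing i with
  | zero => exact diagStream_mem e hU (fun _ => hc) 0 1 i
  | succ n ih => exact diagStream_mem e hU ih (n + 1) _ i

lemma strictMono_stageTime : StrictMono τ :=
  strictMono_nat_of_lt_succ fun _ => lt_nextTime G _ _ _

lemma stageStream_eq_of_le {n m i : ℕ} (hnm : n ≤ m) (hi : i < τ (n + 1)) : ω m i = ω n i := by
  induction m, hnm using Nat.le_induction with
  | base => rfl
  | succ m hnm ih =>
    have him : i < τ (m + 1) := hi.trans_le ((strictMono_stageTime G e c).monotone (by omega))
    rw [stageStream_succ, diagStream_of_lt _ him, ih]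

lemma diagLimit_eq {n i : ℕ} (hi : i < τ (n + 1)) : diagLimit G e c i = ω n i := by
  rcases le_total n i with hni | hin
  · exact stageStream_eq_of_le G e c hni hi
  · exact (stageStream_eq_of_le G e c hin
      ((Nat.lt_succ_self i).trans_le ((strictMono_stageTime G e c).id_le _))).symm

lemma diagLimit_zero : diagLimit G e c 0 = c :=
  diagStream_of_lt (e := e) (n := 0) _ Nat.one_pos

lemma range_subset_range_diagLimit : range (e 0) ⊆ range (diagLimit G e c) := by
  rintro _ ⟨n, rfl⟩
  refine ⟨τ n, ?_⟩
  rw [diagLimit_eq G e c (strictMono_stageTime G e c (Nat.lt_succ_self n)), stageStream_stageTime]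

lemma diagLimit_mem {n i : ℕ} (hi : τ (n + 1) ≤ i) :
    diagLimit G e c i ∈ range (e 0) ∪ ⋃ m > n, range (e m) := by
  have hmono := strictMono_stageTime G e c
  obtain ⟨m, hmi, him⟩ := exists_le_lt_succ_of_strictMono hmono
    ((hmono.monotone (Nat.zero_le _)).trans hi)
  have hnm : n < m := Nat.succ_lt_succ_iff.mp (hmono.lt_iff_lt.mp (hi.trans_lt him))
  rw [diagLimit_eq G e c him]
  rcases stageStream_mem_of_le G e c hmi with h0 | hm
  · exact Or.inl h0
  · exact Or.inr (mem_biUnion hnm hm)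

end Diagonal

theorem not_generatableInLimit_of_inter_subset {H : Set (Set X)} {U : Set X} (e : ℕ → ℕ → X)
    (c : X) (hU : ∀ n k, e n k ∈ U) (hc : c ∈ U)
    (hinter : Pairwise fun i j => range (e i) ∩ range (e j) ⊆ {c})
    (hH : ∀ n, ∀ A ⊆ U, range (e n) ∪ A ∈ H) : ¬ GeneratableInLimit H := by
  rintro ⟨G, hG⟩
  have hmono := strictMono_stageTime G e c
  set x := diagLimit G e c
  have hstage (n : ℕ) : GenOK G (range (e n) ∪ range (stageStream G e c n)) (stageStream G e c n)
      (stageTime G e c (n + 1)) :=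
    genOK_nextTime G _ (hG _ (hH n _ (range_subset_iff.mpr (stageStream_mem G e c hU hc n)))
      _ (isEnum_union_range (range_subset_range_stageStream G e c n)))
  obtain ⟨T, hT⟩ := hG _ (hH 0 _ (range_subset_iff.mpr fun i => stageStream_mem G e c hU hc i i))
    x (isEnum_union_range (range_subset_range_diagLimit G e c))
  set n := T + 1
  set s := stageTime G e c (n + 1)
  have hTs : T < s := (Nat.lt_succ_self T).trans_le ((Nat.le_succ n).trans (hmono.id_le _))
  have hagree : ∀ i < s, x i = stageStream G e c n i := fun i hi => diagLimit_eq G e c hi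
  have hout_n : G (prefList x s) ∈ range (e n) := by
    have h := hstage n
    rw [GenOK, ← prefList_congr hagree] at h
    exact mem_of_mem_union_range_diff_seenSet
      (fun i hi => stageStream_mem_of_lt G e c ((hmono (Nat.lt_succ_self n)).trans_le hi)) h
  obtain ⟨hout_h, hunseen⟩ := hT s hTs.le
  have hout_0 : G (prefList x s) ∈ range (e 0) ∪ ⋃ m > n, range (e m) :=
    mem_of_mem_union_range_diff_seenSet (fun i hi => diagLimit_mem G e c hi)
      ⟨union_subset_union_left _ subset_union_left hout_h, hunseen⟩
  have hout_c : G (prefList x s) = c := by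
    rcases hout_0 with h0 | hm
    · exact hinter (by omega : n ≠ 0) ⟨hout_n, h0⟩
    · obtain ⟨m, hnm, hm⟩ := mem_iUnion₂.mp hm
      exact hinter hnm.ne ⟨hout_n, hm⟩
  exact hunseen (hout_c ▸ ⟨0, (Nat.zero_le T).trans_lt hTs, diagLimit_zero G e c⟩)

noncomputable def primeRatio (i k : ℕ) : ℚ := (Nat.nth Nat.Prime k : ℚ) / Nat.nth Nat.Prime i

lemma primeRatio_pos (i k : ℕ) : 0 < primeRatio i k :=
  div_pos (mod_cast (Nat.prime_nth_prime k).pos) (mod_cast (Nat.prime_nth_prime i).pos)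

lemma primeRatio_injective (i : ℕ) : Function.Injective (primeRatio i) := fun _ _ h =>
  Nat.nth_injective Nat.infinite_setOfPred_prime
    (Nat.cast_injective ((div_left_inj' (mod_cast (Nat.prime_nth_prime i).ne_zero)).mp h))

lemma Qrat_eq_range (i : ℕ) : Qrat i = range (primeRatio i) := by
  ext q
  constructor
  · rintro ⟨p, hp, rfl⟩
    exact ⟨Nat.count Nat.Prime p, by rw [primeRatio, Nat.nth_count hp]⟩
  · rintro ⟨k, rfl⟩
    exact ⟨_, Nat.prime_nth_prime k, rfl⟩

lemma Qrat_infinite (i : ℕ) : (Qrat i).Infinite := by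
  rw [Qrat_eq_range]
  exact infinite_range_of_injective (primeRatio_injective i)

lemma Qrat_inter_subset {i j : ℕ} (hij : i ≠ j) : Qrat i ∩ Qrat j ⊆ {1} := by
  rintro _ ⟨⟨p, hp, rfl⟩, ⟨r, -, he⟩⟩
  have hpi := Nat.prime_nth_prime i
  have hpj := Nat.prime_nth_prime j
  have hcross : p * Nat.nth Nat.Prime j = r * Nat.nth Nat.Prime i := by
    rw [div_eq_div_iff (mod_cast hpi.ne_zero) (mod_cast hpj.ne_zero)] at he
    exact_mod_cast he
  have hdvd : Nat.nth Nat.Prime i ∣ p :=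
    ((Nat.coprime_primes hpi hpj).mpr ((Nat.nth_injective Nat.infinite_setOfPred_prime).ne hij)
      ).dvd_of_dvd_mul_right ⟨r, by rw [hcross, mul_comm]⟩
  rw [← (Nat.prime_dvd_prime_iff_eq hpi hp).mp hdvd, div_self (mod_cast hpi.ne_zero)]
  rfl

/-- each `Hrat i` satisfies UUS and has Closure dimension 0, yet
their countable union is not generatable in the limit. -/
theorem stmt15 :
    (∀ i : ℕ, UUS (Hrat i)) ∧ (∀ i : ℕ, ClosureDimLE (Hrat i) 0) ∧
    ¬ GeneratableInLimit (⋃ i, Hrat i) := by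
  have hsub (i : ℕ) : ∀ h ∈ Hrat i, Qrat i ⊆ h := by
    rintro _ ⟨A, -, rfl⟩
    exact subset_union_left
  refine ⟨fun i => uus_of_forall_subset (Qrat_infinite i) (hsub i),
    fun i _ _ => not_finClosureWitness_of_forall_subset (Qrat_infinite i) (hsub i) _, ?_⟩
  refine not_generatableInLimit_of_inter_subset (U := Ioi 0) primeRatio 1 primeRatio_pos
    (mem_Ioi.mpr one_pos) (fun i j hij => ?_)
    fun n A hA => mem_iUnion.mpr ⟨n, A, hA, by rw [Qrat_eq_range]⟩
  simpa only [Qrat_eq_range] using Qrat_inter_subset hij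
end

section
/- There exists a countable example space X and a countable class H ⊆ {0,1}^X satisfying UUS that is uniformly generatable but not PAC learnable (i.e. has infinite VC dimension). Concretely, X = ℤ and H = {x ↦ 1[x ∈ A or x ≤ 0] : A ⊆ ℕ, |A| < ∞} satisfies UUS, has C(H) = 0, and has VC(H) = ∞. -/
open Set

variable {X : Type*}

/-- `H` shatters the finite set `S` (VC-style shattering). -/
def Shatters {X : Type*} (H : Set (Set X)) (S : Finset X) : Prop :=
  ∀ T ⊆ S, ∃ h ∈ H, ∀ x ∈ S, (x ∈ h ↔ x ∈ T)

/-- The class `{x ↦ 1[x ∈ A or x ≤ 0] : A ⊆ ℕ, |A| < ∞}` over `ℤ`. -/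
def Hfin : Set (Set ℤ) :=
  {h | ∃ A : Set ℤ, A.Finite ∧ (∀ a ∈ A, 0 < a) ∧ h = A ∪ {x : ℤ | x ≤ 0}}

/-! Every hypothesis of `Hfin` contains the infinite ray `ℤ≤0`. A class with an infinite common
core has infinite closures, so its Closure dimension is `0`, and it is generated from scratch by
emitting core points outside the sample. The finite parts `A` on the positive integers, however,
are arbitrary, so every finite set of positive integers is shattered. -/

section CommonCore

variable {H : Set (Set X)} {C : Set X}

theorem subset_hclosure_of_forall_subset (hC : ∀ h ∈ H, C ⊆ h) (S : Set X) :
    C ⊆ hclosure H S :=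
  fun _ hy _ hh => hC _ hh.1 hy

theorem uus_of_forall_subset_s16 (hC : ∀ h ∈ H, C ⊆ h) (hinf : C.Infinite) : UUS H :=
  fun h hh => hinf.mono (hC h hh)

theorem closureDimLE_of_forall_subset (hC : ∀ h ∈ H, C ⊆ h) (hinf : C.Infinite) (d : ℕ) :
    ClosureDimLE H d :=
  fun _ _ ⟨S, _, _, hfin⟩ => hinf (hfin.subset (subset_hclosure_of_forall_subset hC S))

theorem mem_seenSet_iff_mem_prefList {x : ℕ → X} {t : ℕ} {y : X} :
    y ∈ seenSet x t ↔ y ∈ prefList x t := by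
  simp only [seenSet, prefList, List.mem_ofFn, Set.mem_image, Set.mem_ofPred_eq]
  exact ⟨fun ⟨i, hi, hxi⟩ => ⟨⟨i, hi⟩, hxi⟩, fun ⟨i, hxi⟩ => ⟨i, i.isLt, hxi⟩⟩

theorem uniformlyGeneratable_of_forall_subset (hC : ∀ h ∈ H, C ⊆ h) (hinf : C.Infinite) :
    UniformlyGeneratable H := by
  classical
  choose G hGC hGl using fun l : List X => hinf.exists_notMem_finset l.toFinset
  refine ⟨G, 0, fun h hh x _ _ _ s _ => ⟨hC h hh (hGC _), fun hs => hGl (prefList x s) ?_⟩⟩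
  exact List.mem_toFinset.mpr (mem_seenSet_iff_mem_prefList.mp hs)

end CommonCore

theorem Iic_zero_subset_of_mem_Hfin {h : Set ℤ} (hh : h ∈ Hfin) : Iic 0 ⊆ h := by
  obtain ⟨A, -, -, rfl⟩ := hh
  exact subset_union_right

theorem countable_Hfin : Hfin.Countable := by
  refine ((countable_ofPred_finite_subset countable_univ).image (· ∪ Iic 0)).mono ?_
  rintro h ⟨A, hA, -, rfl⟩
  exact ⟨A, ⟨hA, subset_univ A⟩, rfl⟩

theorem shatters_Hfin_of_pos {S : Finset ℤ} (hS : ∀ x ∈ S, 0 < x) : Shatters Hfin S := by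
  intro T hT
  refine ⟨↑T ∪ Iic 0, ⟨↑T, T.finite_toSet, fun a ha => hS a (hT ha), rfl⟩, fun x hx => ?_⟩
  have : ¬ x ≤ 0 := not_le.mpr (hS x hx)
  simp [this]

/-- a countable UUS class with Closure dimension 0 (hence uniformly
generatable) but infinite VC dimension (hence not PAC learnable). -/
theorem stmt16 :
    Hfin.Countable ∧ UUS Hfin ∧ ClosureDimLE Hfin 0 ∧ UniformlyGeneratable Hfin ∧
    ∀ n : ℕ, ∃ S : Finset ℤ, S.card = n ∧ Shatters Hfin S := by
  have hcore : ∀ h ∈ Hfin, Iic (0 : ℤ) ⊆ h := fun _ => Iic_zero_subset_of_mem_Hfin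
  have hinf : (Iic (0 : ℤ)).Infinite := Iic_infinite 0
  refine ⟨countable_Hfin, uus_of_forall_subset_s16 hcore hinf,
    closureDimLE_of_forall_subset hcore hinf 0, uniformlyGeneratable_of_forall_subset hcore hinf,
    fun n => ⟨Finset.Icc 1 (n : ℤ), ?_, ?_⟩⟩
  · simp [Int.card_Icc]
  · exact shatters_Hfin_of_pos fun x hx => (Finset.mem_Icc.mp hx).1
end

section
/- Let X = ℕ, let (p_n) enumerate the primes, and for each infinite bit string b ∈ {0,1}^ℕ with finitely many 1s define h_b with supp(h_b) = {p_n^{1 + Σ_{i=1}^n b_i} : n ∈ ℕ}. The class H = {h_b : |b| < ∞} is countable, satisfies UUS, is non-uniformly generatable, but does not satisfy the Eventually Unbounded Closure property: there exist h ∈ H and an enumeration x₁, x₂, ... of supp(h) such that |⟨x₁,...,x_t⟩_H| < ∞ for every t ∈ ℕ. -/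
open Set

variable {X : Type*}

/-- The support `{p_n^{1 + Σ_{i ≤ n} b_i} : n ∈ ℕ}` associated to a bit string `b`. -/
def suppB (b : ℕ → Bool) : Set ℕ :=
  {m : ℕ | ∃ n : ℕ,
    m = (Nat.nth Nat.Prime n) ^ (1 + ((Finset.range (n + 1)).filter fun i => b i = true).card)}

/-- The class `{h_b : b ∈ {0,1}^ℕ, |b| < ∞}`. -/
def Hbit : Set (Set ℕ) := {h | ∃ b : ℕ → Bool, {i | b i = true}.Finite ∧ h = suppB b}

/-
Writing `c_b(n)` for the number of ones among `b_0, …, b_n`, `supp(h_b)` is the range of the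
strictly increasing sequence `n ↦ p_n^(1 + c_b(n))`. The generator sending the largest example
seen, `p_k^e`, to `p_(k+1)^e` therefore always outputs something larger than every example seen;
once more than `N` distinct examples have been seen, where `N` bounds the ones of `b`, we have
`k ≥ N`, so `c_b(k+1) = c_b(k)` and the output lies in `supp(h_b)`. For `b = 0` and the
enumeration `p_0, p_1, …`, a prime `p_n` with `n ≥ t` is missing from `supp(h_b')` for `b'` the
indicator of `{n}`, which still contains `p_0, …, p_(t-1)`: every closure is the set of examples
seen.
-/

noncomputable def primePowShift (m : ℕ) : ℕ :=
  Nat.nth Nat.Prime (Nat.primeCounting' m.minFac + 1) ^ m.factorization m.minFac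

lemma primePowShift_nth_prime_pow (n : ℕ) {e : ℕ} (he : e ≠ 0) :
    primePowShift (Nat.nth Nat.Prime n ^ e) = Nat.nth Nat.Prime (n + 1) ^ e := by
  have hp := Nat.prime_nth_prime n
  simp [primePowShift, hp.pow_minFac he, hp.factorization_pow, Nat.primeCounting'_nth_eq]

noncomputable def shiftMaxGen (l : List ℕ) : ℕ := primePowShift (l.toFinset.sup id)

lemma coe_toFinset_prefList {X : Type*} [DecidableEq X] (x : ℕ → X) (s : ℕ) :
    ((prefList x s).toFinset : Set X) = seenSet x s := by
  ext y
  simp only [prefList, seenSet, List.coe_toFinset, mem_ofPred_eq, List.mem_ofFn, mem_image]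
  exact ⟨fun ⟨i, hi⟩ => ⟨i, i.2, hi⟩, fun ⟨i, hi, hy⟩ => ⟨⟨i, hi⟩, hy⟩⟩

lemma exists_sup_eq_and_card_le {f : ℕ → ℕ} (hf : StrictMono f) {S : Finset ℕ}
    (hS : ↑S ⊆ range f) (hne : S.Nonempty) : ∃ k, S.sup id = f k ∧ S.card ≤ k + 1 := by
  obtain ⟨m, hmS, hm⟩ := S.exists_mem_eq_sup hne id
  obtain ⟨k, rfl⟩ := hS hmS
  refine ⟨k, hm, ?_⟩
  have hsub : S ⊆ (Finset.range (k + 1)).image f := fun y hy => by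
    obtain ⟨j, rfl⟩ := hS hy
    have hjk : f j ≤ f k := (Finset.le_sup (f := id) hy).trans_eq hm
    exact Finset.mem_image_of_mem f (Finset.mem_range.2 (Nat.lt_succ_of_le (hf.le_iff_le.1 hjk)))
  calc S.card ≤ ((Finset.range (k + 1)).image f).card := Finset.card_le_card hsub
    _ ≤ k + 1 := Finset.card_image_le.trans (Finset.card_range _).le

namespace Hbit

noncomputable def suppSeq (b : ℕ → Bool) (n : ℕ) : ℕ :=
  Nat.nth Nat.Prime n ^ (1 + ((Finset.range (n + 1)).filter fun i => b i = true).card)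

lemma suppB_eq_range (b : ℕ → Bool) : suppB b = range (suppSeq b) := by
  ext m
  exact exists_congr fun n => eq_comm

lemma suppSeq_strictMono (b : ℕ → Bool) : StrictMono (suppSeq b) := by
  refine strictMono_nat_of_lt_succ fun n => ?_
  have hcard : ((Finset.range (n + 1)).filter fun i => b i = true).card ≤
      ((Finset.range (n + 1 + 1)).filter fun i => b i = true).card :=
    Finset.card_le_card (Finset.filter_subset_filter _ (Finset.range_subset_range.2 (n + 1).le_succ))
  calc suppSeq b n
      < Nat.nth Nat.Prime (n + 1) ^ (1 + ((Finset.range (n + 1)).filter fun i => b i = true).card) :=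
        Nat.pow_lt_pow_left (Nat.nth_strictMono Nat.infinite_setOfPred_prime n.lt_succ_self)
          (by omega)
    _ ≤ suppSeq b (n + 1) :=
        Nat.pow_le_pow_right (Nat.prime_nth_prime _).pos (by omega)

lemma suppSeq_succ_of_false {b : ℕ → Bool} {n : ℕ} (hb : b (n + 1) = false) :
    suppSeq b (n + 1) = primePowShift (suppSeq b n) := by
  rw [suppSeq, suppSeq, primePowShift_nth_prime_pow n (by omega),
    Finset.range_add_one (n := n + 1), Finset.filter_insert]
  simp [hb]

lemma suppSeq_of_forall_false {b : ℕ → Bool} {n : ℕ} (hb : ∀ i ≤ n, b i = false) :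
    suppSeq b n = Nat.nth Nat.Prime n := by
  have : ((Finset.range (n + 1)).filter fun i => b i = true) = ∅ :=
    Finset.filter_false_of_mem fun i hi => by simp [hb i (Nat.lt_succ_iff.1 (Finset.mem_range.1 hi))]
  simp [suppSeq, this]

lemma nth_prime_notMem_suppB {b : ℕ → Bool} {n : ℕ} (hb : b n = true) :
    Nat.nth Nat.Prime n ∉ suppB b := by
  rintro ⟨m, hm⟩
  obtain ⟨hpm, hexp⟩ := ((Nat.prime_nth_prime n).pow_eq_iff).1 hm.symm
  obtain rfl : n = m := ((Nat.nth_strictMono Nat.infinite_setOfPred_prime).injective hpm).symm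
  have : n ∈ (Finset.range (n + 1)).filter fun i => b i = true := by simp [hb]
  have := Finset.card_pos.2 ⟨n, this⟩
  omega

lemma countable : Hbit.Countable := by
  refine (countable_range fun s : Finset ℕ => suppB fun i => decide (i ∈ s)).mono ?_
  rintro _ ⟨b, hb, rfl⟩
  exact ⟨hb.toFinset, congrArg suppB (funext fun i => by simp)⟩

lemma uus : UUS Hbit := by
  rintro _ ⟨b, -, rfl⟩
  rw [suppB_eq_range]
  exact infinite_range_of_injective (suppSeq_strictMono b).injective

lemma nonUniformlyGeneratable : NonUniformlyGeneratable Hbit := by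
  refine ⟨shiftMaxGen, ?_⟩
  rintro _ ⟨b, hb, rfl⟩
  obtain ⟨N, hN⟩ := hb.bddAbove
  refine ⟨N + 1, fun x hx t ht s hts => ?_⟩
  set S := (prefList x s).toFinset
  have hSx : (S : Set ℕ) = seenSet x s := coe_toFinset_prefList x s
  have hS : (S : Set ℕ) ⊆ range (suppSeq b) := by
    rw [hSx, ← suppB_eq_range]
    exact image_subset_iff.2 fun i _ => hx i
  have hcard : N + 1 ≤ S.card := by
    rw [← ht, ← Set.ncard_coe_finset, hSx]
    exact ncard_le_ncard (image_mono fun i hi => lt_of_lt_of_le hi hts) ((finite_lt_nat s).image x)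
  obtain ⟨k, hk, hSk⟩ :=
    exists_sup_eq_and_card_le (suppSeq_strictMono b) hS (Finset.card_pos.1 (by omega))
  have hgen : shiftMaxGen (prefList x s) = suppSeq b (k + 1) := by
    rw [shiftMaxGen, hk, suppSeq_succ_of_false]
    by_contra h
    have := hN (show k + 1 ∈ {i | b i = true} by simpa using h)
    omega
  rw [GenOK, hgen, ← hSx]
  refine ⟨(suppB_eq_range b).symm ▸ mem_range_self _, fun hmem => ?_⟩
  have hle : suppSeq b (k + 1) ≤ suppSeq b k := (Finset.le_sup (f := id) hmem).trans_eq hk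
  exact absurd hle (not_le.2 (suppSeq_strictMono b k.lt_succ_self))

lemma suppB_false : suppB (fun _ => false) = range (Nat.nth Nat.Prime) := by
  rw [suppB_eq_range]
  exact congrArg range (funext fun n => suppSeq_of_forall_false fun _ _ => rfl)

lemma hclosure_seenSet_nth_prime (t : ℕ) :
    hclosure Hbit (seenSet (Nat.nth Nat.Prime) t) = seenSet (Nat.nth Nat.Prime) t := by
  refine subset_antisymm (fun y hy => ?_) (subset_sInter fun _ hh => hh.2)
  have hfalse : suppB (fun _ => false) ∈ versionSpace Hbit (seenSet (Nat.nth Nat.Prime) t) := by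
    refine ⟨⟨_, by simp, rfl⟩, ?_⟩
    rw [suppB_false]
    exact image_subset_range _ _
  obtain ⟨n, rfl⟩ : y ∈ range (Nat.nth Nat.Prime) := suppB_false ▸ mem_sInter.1 hy _ hfalse
  refine ⟨n, show n < t from not_le.1 fun htn => ?_, rfl⟩
  have hsingle : suppB (fun i => decide (i = n)) ∈
      versionSpace Hbit (seenSet (Nat.nth Nat.Prime) t) := by
    refine ⟨⟨_, (finite_singleton n).subset (by simp), rfl⟩, ?_⟩
    rintro _ ⟨i, hi : i < t, rfl⟩
    rw [suppB_eq_range, ← suppSeq_of_forall_false (b := fun i => decide (i = n))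
      fun j hj => decide_eq_false (by omega)]
    exact mem_range_self i
  exact nth_prime_notMem_suppB (by simp) (mem_sInter.1 hy _ hsingle)

lemma exists_isEnum_forall_hclosure_finite :
    ∃ h ∈ Hbit, ∃ x : ℕ → ℕ, IsEnum h x ∧ ∀ t, (hclosure Hbit (seenSet x t)).Finite := by
  refine ⟨_, ⟨fun _ => false, by simp, rfl⟩, Nat.nth Nat.Prime, ?_, fun t => ?_⟩
  · rw [suppB_false]
    exact ⟨mem_range_self, fun _ ⟨n, hn⟩ => ⟨n, hn⟩⟩
  · rw [hclosure_seenSet_nth_prime]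
    exact (finite_lt_nat t).image _

end Hbit

/-- `Hbit` is countable, satisfies UUS, and is non-uniformly
generatable, but fails the Eventually Unbounded Closure property: some `h ∈ Hbit`
has an enumeration all of whose closures are finite. -/
theorem stmt18 :
    Hbit.Countable ∧ UUS Hbit ∧ NonUniformlyGeneratable Hbit ∧
    ∃ h ∈ Hbit, ∃ x : ℕ → ℕ, IsEnum h x ∧
      ∀ t : ℕ, (hclosure Hbit (seenSet x t)).Finite :=
  ⟨Hbit.countable, Hbit.uus, Hbit.nonUniformlyGeneratable,
    Hbit.exists_isEnum_forall_hclosure_finite⟩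
end
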